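/- The rank invariant is not a complete invariant of 2-D persistence modules: there exist a field K and two pointwise finite dimensional 2-D persistence modules M and N over K such that M and N are not isomorphic (as functors from the poset ℝ² to K-vector spaces), yet their rank invariants are equal, i.e., for all a ≤ b in ℝ², the rank of M(a ≤ b) equals the rank of N(a ≤ b). -/

import Mathlib

/-- A 2-D persistence module over a field `K`: a functor from the poset `ℝ²`
(with the product order) to the category of `K`-vector spaces, given by a vector
space `V a` for each `a : ℝ × ℝ` and a linear map `map h : V a →ₗ[K] V b` for each
`h : a ≤ b`, functorially. -/
structure PersistenceModule2D (K : Type) [Field K] where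
  V : ℝ × ℝ → Type
  [addCommGroup : ∀ a, AddCommGroup (V a)]
  [module : ∀ a, Module K (V a)]
  map : ∀ {a b : ℝ × ℝ}, a ≤ b → (V a →ₗ[K] V b)
  map_id : ∀ a : ℝ × ℝ, map (le_refl a) = LinearMap.id
  map_comp : ∀ {a b c : ℝ × ℝ} (hab : a ≤ b) (hbc : b ≤ c),
    map (le_trans hab hbc) = (map hbc).comp (map hab)

attribute [instance] PersistenceModule2D.addCommGroup PersistenceModule2D.module

/-!
For an order-convex `S ⊆ ℝ²` let `I_S` be the interval module: `K` on `S`, `0` elsewhere, with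
identity maps inside `S`. Take the strips `V = [0,1) × [0,∞)` and `H = [0,∞) × [0,1)`. If `a ≤ b`
with `a` in one strip and `b` in the other, then `a` lies in both; this exchange property makes
`rk(I_V ⊕ I_H) = rk(I_{V ∪ H} ⊕ I_{V ∩ H})` a case check. But the generator of `I_{V ∩ H}` at the
origin is killed both by the map to `(0,1) ∈ V \ H` and by the map to `(1,0) ∈ H \ V`, whereas
in `I_V ⊕ I_H` only `0` is killed by both, so the two modules are not isomorphic.
-/

universe u

theorem Set.OrdConnected.prod {α β : Type*} [Preorder α] [Preorder β] {s : Set α} {t : Set β}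
    (hs : s.OrdConnected) (ht : t.OrdConnected) : (s ×ˢ t).OrdConnected :=
  ⟨fun _ ha _ hc _ hb =>
    ⟨hs.out ha.1 hc.1 ⟨hb.1.1, hb.2.1⟩, ht.out ha.2 hc.2 ⟨hb.1.2, hb.2.2⟩⟩⟩

theorem Set.OrdConnected.union_of_exchange {α : Type*} [Preorder α] {S T : Set α}
    (hS : S.OrdConnected) (hT : T.OrdConnected)
    (hST : ∀ ⦃a b⦄, a ≤ b → a ∈ S → b ∈ T → a ∈ T)
    (hTS : ∀ ⦃a b⦄, a ≤ b → a ∈ T → b ∈ S → a ∈ S) : (S ∪ T).OrdConnected := by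
  refine ⟨fun a ha c hc b hb => ?_⟩
  have hac := hb.1.trans hb.2
  rcases ha with haS | haT <;> rcases hc with hcS | hcT
  · exact Or.inl (hS.out haS hcS hb)
  · exact Or.inr (hT.out (hST hac haS hcT) hcT hb)
  · exact Or.inl (hS.out (hTS hac haT hcS) hcS hb)
  · exact Or.inr (hT.out haT hcT hb)

def Submodule.prodEquivProd {R M N : Type*} [Semiring R] [AddCommMonoid M] [AddCommMonoid N]
    [Module R M] [Module R N] (p : Submodule R M) (q : Submodule R N) :
    p.prod q ≃ₗ[R] p × q where
  toFun x := (⟨x.1.1, x.2.1⟩, ⟨x.1.2, x.2.2⟩)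
  invFun y := ⟨(y.1, y.2), y.1.2, y.2.2⟩
  map_add' _ _ := rfl
  map_smul' _ _ := rfl
  left_inv _ := rfl
  right_inv _ := rfl

theorem LinearMap.rank_prodMap {K M₁ M₂ : Type*} {N₁ N₂ : Type u} [DivisionRing K]
    [AddCommGroup M₁] [AddCommGroup M₂] [AddCommGroup N₁] [AddCommGroup N₂]
    [Module K M₁] [Module K M₂] [Module K N₁] [Module K N₂]
    (f : M₁ →ₗ[K] N₁) (g : M₂ →ₗ[K] N₂) :
    (f.prodMap g).rank = f.rank + g.rank := by
  rw [LinearMap.rank, LinearMap.range_prodMap, (Submodule.prodEquivProd _ _).rank_eq, rank_prod']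

namespace PersistenceModule2D

variable {K : Type} [Field K]

def prod (M N : PersistenceModule2D K) : PersistenceModule2D K where
  V a := M.V a × N.V a
  map h := (M.map h).prodMap (N.map h)
  map_id a := by rw [M.map_id, N.map_id, LinearMap.prodMap_id]
  map_comp hab hbc := by rw [M.map_comp hab hbc, N.map_comp hab hbc, LinearMap.prodMap_comp]

instance (M N : PersistenceModule2D K) [∀ a, FiniteDimensional K (M.V a)]
    [∀ a, FiniteDimensional K (N.V a)] (a : ℝ × ℝ) : FiniteDimensional K ((M.prod N).V a) :=
  inferInstanceAs (FiniteDimensional K (M.V a × N.V a))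

theorem prod_map_mk_eq_zero_iff {M N : PersistenceModule2D K} {a b : ℝ × ℝ} (h : a ≤ b)
    {x : M.V a} {y : N.V a} : (M.prod N).map h (x, y) = 0 ↔ M.map h x = 0 ∧ N.map h y = 0 :=
  Prod.mk_eq_zero

theorem prod_mk_eq_zero {M N : PersistenceModule2D K} {a : ℝ × ℝ} {x : M.V a} {y : N.V a} :
    ((x, y) : (M.prod N).V a) = 0 ↔ x = 0 ∧ y = 0 :=
  Prod.mk_eq_zero

theorem rank_prod_map (M N : PersistenceModule2D K) {a b : ℝ × ℝ} (h : a ≤ b) :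
    ((M.prod N).map h).rank = (M.map h).rank + (N.map h).rank :=
  LinearMap.rank_prodMap _ _

theorem map_symm_eq_zero {M N : PersistenceModule2D K} {φ : ∀ a, M.V a ≃ₗ[K] N.V a}
    (hφ : ∀ (a b : ℝ × ℝ) (h : a ≤ b) (x : M.V a), φ b (M.map h x) = N.map h (φ a x))
    {a b : ℝ × ℝ} (h : a ≤ b) {y : N.V a} (hy : N.map h y = 0) :
    M.map h ((φ a).symm y) = 0 := by
  rw [← (φ b).map_eq_zero_iff, hφ, LinearEquiv.apply_symm_apply, hy]

theorem not_exists_natural_iso_of_joint_ker {M N : PersistenceModule2D K} {o p q : ℝ × ℝ}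
    (hop : o ≤ p) (hoq : o ≤ q) (hM : ∀ x : M.V o, M.map hop x = 0 → M.map hoq x = 0 → x = 0)
    (hN : ∃ y : N.V o, y ≠ 0 ∧ N.map hop y = 0 ∧ N.map hoq y = 0) :
    ¬ ∃ φ : ∀ a : ℝ × ℝ, M.V a ≃ₗ[K] N.V a,
      ∀ (a b : ℝ × ℝ) (h : a ≤ b) (x : M.V a), φ b (M.map h x) = N.map h (φ a x) := by
  rintro ⟨φ, hφ⟩
  obtain ⟨y, hy, hyp, hyq⟩ := hN
  exact hy ((φ o).symm.map_eq_zero_iff.1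
    (hM _ (map_symm_eq_zero hφ hop hyp) (map_symm_eq_zero hφ hoq hyq)))

open scoped Classical in
/-- The values of an interval module are taken as submodules of `K`, so that the indicator of
`S` needs no case split on types. -/
noncomputable def intervalSubmodule (K : Type) [Field K] (S : Set (ℝ × ℝ)) (a : ℝ × ℝ) :
    Submodule K K :=
  if a ∈ S then ⊤ else ⊥

section intervalModule

variable (S : Set (ℝ × ℝ))

theorem intervalSubmodule_of_mem {a : ℝ × ℝ} (ha : a ∈ S) : intervalSubmodule K S a = ⊤ :=
  if_pos ha

theorem intervalSubmodule_of_notMem {a : ℝ × ℝ} (ha : a ∉ S) : intervalSubmodule K S a = ⊥ :=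
  if_neg ha

theorem intervalSubmodule.eq_zero_of_notMem {a : ℝ × ℝ} (ha : a ∉ S)
    (x : intervalSubmodule K S a) : x = 0 := by
  obtain ⟨x, hx⟩ := x
  rw [intervalSubmodule_of_notMem S ha, Submodule.mem_bot] at hx
  exact Subtype.ext hx

open scoped Classical in
noncomputable def intervalMap (K : Type) [Field K] (S : Set (ℝ × ℝ)) (a b : ℝ × ℝ) :
    intervalSubmodule K S a →ₗ[K] intervalSubmodule K S b :=
  LinearMap.restrict (if b ∈ S then LinearMap.id else 0) fun x _ => by
    by_cases hb : b ∈ S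
    · simp [intervalSubmodule_of_mem S hb]
    · simp [hb]

open scoped Classical in
theorem coe_intervalMap_apply {a b : ℝ × ℝ} (x : intervalSubmodule K S a) :
    (intervalMap K S a b x : K) = if b ∈ S then (x : K) else 0 := by
  by_cases hb : b ∈ S <;> simp [intervalMap, hb]

theorem intervalMap_of_notMem {a b : ℝ × ℝ} (hb : b ∉ S) : intervalMap K S a b = 0 := by
  ext x
  exact (coe_intervalMap_apply S x).trans (if_neg hb)

theorem intervalMap_injective {a b : ℝ × ℝ} (hb : b ∈ S) :
    Function.Injective (intervalMap K S a b) := fun x y hxy => by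
  have := congrArg Subtype.val hxy
  rwa [coe_intervalMap_apply, coe_intervalMap_apply, if_pos hb, if_pos hb,
    SetLike.coe_eq_coe] at this

open scoped Classical in
theorem rank_intervalMap (a b : ℝ × ℝ) :
    (intervalMap K S a b).rank = if a ∈ S ∧ b ∈ S then 1 else 0 := by
  split_ifs with hab
  · have hsurj : Function.Surjective (intervalMap K S a b) := fun y =>
      ⟨⟨y, by rw [intervalSubmodule_of_mem S hab.1]; trivial⟩,
        Subtype.ext ((coe_intervalMap_apply S _).trans (if_pos hab.2))⟩
    rw [LinearMap.rank, LinearMap.range_eq_top.2 hsurj, rank_top,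
      intervalSubmodule_of_mem S hab.2, rank_top, Module.rank_self]
  · by_cases hb : b ∈ S
    · have hmap : intervalMap K S a b = 0 := by
        ext x
        rw [intervalSubmodule.eq_zero_of_notMem S (fun ha => hab ⟨ha, hb⟩) x, map_zero,
          LinearMap.zero_apply]
      rw [hmap, LinearMap.rank_zero]
    · rw [intervalMap_of_notMem S hb, LinearMap.rank_zero]

noncomputable def intervalModule (K : Type) [Field K] (S : Set (ℝ × ℝ)) (hS : S.OrdConnected) :
    PersistenceModule2D K where
  V a := intervalSubmodule K S a
  map {a b} _ := intervalMap K S a b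
  map_id a := by
    ext x
    rw [coe_intervalMap_apply]
    split_ifs with ha
    · rfl
    · rw [intervalSubmodule.eq_zero_of_notMem S ha x]; rfl
  map_comp {a b c} hab hbc := by
    ext x
    rw [LinearMap.comp_apply, coe_intervalMap_apply, coe_intervalMap_apply, coe_intervalMap_apply]
    by_cases hb : b ∈ S
    · simp only [hb, if_true]
    · by_cases hc : c ∈ S
      · have ha : a ∉ S := fun ha => hb (hS.out ha hc ⟨hab, hbc⟩)
        simp [intervalSubmodule.eq_zero_of_notMem S ha x]
      · simp only [hc, if_false]

variable {S} (hS : S.OrdConnected)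

instance (a : ℝ × ℝ) : FiniteDimensional K ((intervalModule K S hS).V a) :=
  inferInstanceAs (FiniteDimensional K (intervalSubmodule K S a))

theorem intervalModule_map_eq_zero_iff {a b : ℝ × ℝ} (h : a ≤ b) (hb : b ∈ S)
    {x : (intervalModule K S hS).V a} : (intervalModule K S hS).map h x = 0 ↔ x = 0 :=
  (injective_iff_map_eq_zero' ((intervalModule K S hS).map h)).1 (intervalMap_injective S hb) x

theorem intervalModule_map_of_notMem {a b : ℝ × ℝ} (h : a ≤ b) (hb : b ∉ S) :
    (intervalModule K S hS).map h = 0 :=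
  intervalMap_of_notMem S hb

theorem exists_ne_zero_intervalModule {a : ℝ × ℝ} (ha : a ∈ S) :
    ∃ x : (intervalModule K S hS).V a, x ≠ 0 :=
  ⟨⟨1, by rw [intervalSubmodule_of_mem S ha]; trivial⟩,
    fun h => one_ne_zero (congrArg (Subtype.val : intervalSubmodule K S a → K) h)⟩

open scoped Classical in
theorem rank_intervalModule_map {a b : ℝ × ℝ} (h : a ≤ b) :
    ((intervalModule K S hS).map h).rank = if a ∈ S ∧ b ∈ S then 1 else 0 :=
  rank_intervalMap S a b

end intervalModule

section unionInter

variable {S T : Set (ℝ × ℝ)} (hS : S.OrdConnected) (hT : T.OrdConnected)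
  (hST : ∀ ⦃a b⦄, a ≤ b → a ∈ S → b ∈ T → a ∈ T) (hTS : ∀ ⦃a b⦄, a ≤ b → a ∈ T → b ∈ S → a ∈ S)

theorem rank_intervalModule_prod_map_eq_union_inter {a b : ℝ × ℝ} (h : a ≤ b) :
    (((intervalModule K S hS).prod (intervalModule K T hT)).map h).rank =
      (((intervalModule K (S ∪ T) (hS.union_of_exchange hT hST hTS)).prod
        (intervalModule K (S ∩ T) (hS.inter hT))).map h).rank := by
  simp only [rank_prod_map, rank_intervalModule_map, Set.mem_union, Set.mem_inter_iff]
  have := hST h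
  have := hTS h
  by_cases haS : a ∈ S <;> by_cases hbS : b ∈ S <;> by_cases haT : a ∈ T <;>
    by_cases hbT : b ∈ T <;> simp_all

theorem not_exists_iso_intervalModule_prod_union_inter {o p q : ℝ × ℝ} (hop : o ≤ p) (hoq : o ≤ q)
    (ho : o ∈ S ∩ T) (hp : p ∈ S \ T) (hq : q ∈ T \ S) :
    ¬ ∃ φ : ∀ a, ((intervalModule K S hS).prod (intervalModule K T hT)).V a ≃ₗ[K]
        ((intervalModule K (S ∪ T) (hS.union_of_exchange hT hST hTS)).prod
          (intervalModule K (S ∩ T) (hS.inter hT))).V a,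
      ∀ (a b : ℝ × ℝ) (h : a ≤ b) (x : ((intervalModule K S hS).prod (intervalModule K T hT)).V a),
        φ b (((intervalModule K S hS).prod (intervalModule K T hT)).map h x) =
          ((intervalModule K (S ∪ T) (hS.union_of_exchange hT hST hTS)).prod
            (intervalModule K (S ∩ T) (hS.inter hT))).map h (φ a x) := by
  refine not_exists_natural_iso_of_joint_ker hop hoq ?_ ?_
  · rintro ⟨x₁, x₂⟩ hxp hxq
    rw [prod_map_mk_eq_zero_iff, intervalModule_map_eq_zero_iff hS hop hp.1] at hxp
    rw [prod_map_mk_eq_zero_iff, intervalModule_map_eq_zero_iff hT hoq hq.1] at hxq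
    exact prod_mk_eq_zero.2 ⟨hxp.1, hxq.2⟩
  · obtain ⟨y, hy⟩ := exists_ne_zero_intervalModule (hS.inter hT) ho (K := K)
    refine ⟨(0, y), fun h => hy (prod_mk_eq_zero.1 h).2, ?_, ?_⟩
    · refine prod_map_mk_eq_zero_iff hop |>.2 ⟨map_zero _, ?_⟩
      rw [intervalModule_map_of_notMem (hS.inter hT) hop fun h => hp.2 h.2, LinearMap.zero_apply]
    · refine prod_map_mk_eq_zero_iff hoq |>.2 ⟨map_zero _, ?_⟩
      rw [intervalModule_map_of_notMem (hS.inter hT) hoq fun h => hq.2 h.1, LinearMap.zero_apply]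

end unionInter

end PersistenceModule2D

/-- The rank invariant is not a complete invariant of 2-D persistence
modules: there exist a field `K` and two pointwise finite dimensional 2-D persistence
modules `M`, `N` over `K` which are not isomorphic (i.e., there is no natural
isomorphism between them, as functors from the poset `ℝ²` to `K`-vector spaces), yet
for all `a ≤ b` in `ℝ²` the ranks of `M(a ≤ b)` and `N(a ≤ b)` agree. -/
theorem rank_invariant_not_complete :
    ∃ (K : Type) (_ : Field K) (M N : PersistenceModule2D K),
      (∀ a : ℝ × ℝ, FiniteDimensional K (M.V a)) ∧
      (∀ a : ℝ × ℝ, FiniteDimensional K (N.V a)) ∧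
      (¬ ∃ φ : ∀ a : ℝ × ℝ, M.V a ≃ₗ[K] N.V a,
        ∀ (a b : ℝ × ℝ) (h : a ≤ b) (x : M.V a),
          φ b (M.map h x) = N.map h (φ a x)) ∧
      (∀ (a b : ℝ × ℝ) (h : a ≤ b),
        LinearMap.rank (M.map h) = LinearMap.rank (N.map h)) := by
  let V : Set (ℝ × ℝ) := Set.Ico 0 1 ×ˢ Set.Ici 0
  let H : Set (ℝ × ℝ) := Set.Ici 0 ×ˢ Set.Ico 0 1
  have hV : V.OrdConnected := Set.ordConnected_Ico.prod Set.ordConnected_Ici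
  have hH : H.OrdConnected := Set.ordConnected_Ici.prod Set.ordConnected_Ico
  have hVH : ∀ ⦃a b⦄, a ≤ b → a ∈ V → b ∈ H → a ∈ H := fun _ _ h ha hb =>
    ⟨ha.1.1, ha.2, h.2.trans_lt hb.2.2⟩
  have hHV : ∀ ⦃a b⦄, a ≤ b → a ∈ H → b ∈ V → a ∈ V := fun _ _ h ha hb =>
    ⟨⟨ha.1, h.1.trans_lt hb.1.2⟩, ha.2.1⟩
  refine ⟨ℚ, inferInstance,
    (PersistenceModule2D.intervalModule ℚ V hV).prod (PersistenceModule2D.intervalModule ℚ H hH),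
    (PersistenceModule2D.intervalModule ℚ (V ∪ H) (hV.union_of_exchange hH hVH hHV)).prod
      (PersistenceModule2D.intervalModule ℚ (V ∩ H) (hV.inter hH)),
    fun _ => inferInstance, fun _ => inferInstance,
    PersistenceModule2D.not_exists_iso_intervalModule_prod_union_inter hV hH hVH hHV
      (o := (0, 0)) (p := (0, 1)) (q := (1, 0)) ?_ ?_ ?_ ?_ ?_,
    fun _ _ h =>
      PersistenceModule2D.rank_intervalModule_prod_map_eq_union_inter hV hH hVH hHV h⟩ <;>
  norm_num [V, H]
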